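/- arXiv:1501.02918 — 3 statements merged into one kernel-verified Lean document; each statement's English description precedes it below -/
import Mathlib

section
/- Iterating minimum-degree vertex deletion: if H is a hypergraph on n vertices with m hyperedges each of size at most d, and one repeatedly deletes a minimum-degree vertex (together with all incident hyperedges) for n - k steps, then the number of hyperedges remaining at the end is at least m · ∏_{θ=1}^{n-k} (1 - d/(n - θ + 1)). -/
/-! Double counting: the degrees in the hypergraph induced on the retained set `T` sum to at most
`d` times its number of hyperedges, so a vertex of minimum degree lies in at most a `d / |T|`
fraction of them, and deleting it keeps at least a `1 - d / |T|` fraction. At step `θ` the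
retained set has `n - θ + 1 > k ≥ d` vertices, so every factor is nonnegative and the bounds
multiply. -/

open Finset

namespace Hypergraph

variable {V : Type*} [DecidableEq V]

def inducedCard (E : Multiset (Finset V)) (T : Finset V) : ℕ :=
  (E.filter (fun e => e ⊆ T)).card

def degreeIn (E : Multiset (Finset V)) (T : Finset V) (u : V) : ℕ :=
  (E.filter (fun e => e ⊆ T ∧ u ∈ e)).card

theorem inducedCard_eq_inducedCard_erase_add_degreeIn (E : Multiset (Finset V)) (T : Finset V)
    (v : V) : inducedCard E T = inducedCard E (T.erase v) + degreeIn E T v := by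
  have hErase : inducedCard E (T.erase v) = (E.filter fun e => e ⊆ T ∧ v ∉ e).card := by
    simp only [inducedCard, subset_erase]
  rw [hErase, degreeIn, inducedCard, ← Multiset.filter_add_not (v ∉ ·) (E.filter (· ⊆ T)),
    Multiset.card_add, Multiset.filter_filter, Multiset.filter_filter]
  simp only [not_not, and_comm]

theorem sum_card_filter_mem_le {d : ℕ} (T : Finset V) {F : Multiset (Finset V)}
    (hF : ∀ e ∈ F, e.card ≤ d) : ∑ u ∈ T, (F.filter (u ∈ ·)).card ≤ d * Multiset.card F := by
  induction F using Multiset.induction_on with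
  | empty => simp
  | cons e F ih =>
    have hF' := ih fun e' he' => hF e' (Multiset.mem_cons_of_mem he')
    have he : #(T.filter (· ∈ e)) ≤ d :=
      (card_le_card fun u hu => (mem_filter.mp hu).2).trans (hF e (Multiset.mem_cons_self e F))
    simp only [← Multiset.countP_eq_card_filter, Multiset.countP_cons, sum_add_distrib,
      sum_boole, Multiset.card_cons, Nat.cast_id] at hF' ⊢
    rw [mul_add_one]
    omega

theorem sum_degreeIn_le {d : ℕ} {E : Multiset (Finset V)} (hE : ∀ e ∈ E, e.card ≤ d)
    (T : Finset V) : ∑ u ∈ T, degreeIn E T u ≤ d * inducedCard E T := by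
  calc ∑ u ∈ T, degreeIn E T u = ∑ u ∈ T, ((E.filter (· ⊆ T)).filter (u ∈ ·)).card := by
        simp only [degreeIn, Multiset.filter_filter, and_comm]
    _ ≤ d * inducedCard E T :=
        sum_card_filter_mem_le T fun e he => hE e (Multiset.mem_of_mem_filter he)

theorem card_mul_degreeIn_le {d : ℕ} {E : Multiset (Finset V)} (hE : ∀ e ∈ E, e.card ≤ d)
    {T : Finset V} {v : V} (hmin : ∀ u ∈ T, degreeIn E T v ≤ degreeIn E T u) :
    #T * degreeIn E T v ≤ d * inducedCard E T :=
  (card_nsmul_le_sum T _ _ hmin).trans (sum_degreeIn_le hE T)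

theorem one_sub_div_card_mul_inducedCard_le {d : ℕ} {E : Multiset (Finset V)}
    (hE : ∀ e ∈ E, e.card ≤ d) {T : Finset V} {v : V} (hv : v ∈ T)
    (hmin : ∀ u ∈ T, degreeIn E T v ≤ degreeIn E T u) :
    (1 - d / #T : ℚ) * inducedCard E T ≤ inducedCard E (T.erase v) := by
  have hT : (0 : ℚ) < #T := by exact_mod_cast card_pos.mpr ⟨v, hv⟩
  have hdeg : (#T * degreeIn E T v : ℚ) ≤ d * inducedCard E T := by
    exact_mod_cast card_mul_degreeIn_le hE hmin
  have hsplit : (inducedCard E T : ℚ) = inducedCard E (T.erase v) + degreeIn E T v := by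
    exact_mod_cast inducedCard_eq_inducedCard_erase_add_degreeIn E T v
  calc (1 - d / #T : ℚ) * inducedCard E T
      = inducedCard E T - d * inducedCard E T / #T := by field_simp
    _ ≤ inducedCard E T - degreeIn E T v := by
      rw [sub_le_sub_iff_left, le_div_iff₀ hT, mul_comm]
      exact hdeg
    _ = inducedCard E (T.erase v) := by rw [hsplit]; ring

def IsMinDegreeDeletion (E : Multiset (Finset V)) (S : ℕ → Finset V) (v : ℕ → V) (r : ℕ) :
    Prop :=
  ∀ θ < r, v θ ∈ S θ ∧ (∀ u ∈ S θ, degreeIn E (S θ) (v θ) ≤ degreeIn E (S θ) u) ∧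
    S (θ + 1) = (S θ).erase (v θ)

namespace IsMinDegreeDeletion

variable {E : Multiset (Finset V)} {S : ℕ → Finset V} {v : ℕ → V} {r : ℕ}

theorem card_eq (h : IsMinDegreeDeletion E S v r) {t : ℕ} (ht : t ≤ r) :
    #(S t) = #(S 0) - t := by
  induction t with
  | zero => rfl
  | succ t ih =>
    obtain ⟨hv, -, hS⟩ := h t ht
    rw [hS, card_erase_of_mem hv, ih (Nat.le_of_succ_le ht), Nat.sub_sub]

theorem prod_mul_inducedCard_le {d : ℕ} (h : IsMinDegreeDeletion E S v r)
    (hE : ∀ e ∈ E, e.card ≤ d) (hd : ∀ θ < r, d ≤ #(S θ)) {t : ℕ} (ht : t ≤ r) :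
    (∏ θ ∈ range t, (1 - d / #(S θ) : ℚ)) * inducedCard E (S 0) ≤ inducedCard E (S t) := by
  induction t with
  | zero => simp
  | succ t ih =>
    obtain ⟨hv, hmin, hS⟩ := h t ht
    have hfactor : (0 : ℚ) ≤ 1 - d / #(S t) := by
      rw [sub_nonneg]
      exact div_le_one_of_le₀ (by exact_mod_cast hd t ht) (Nat.cast_nonneg _)
    calc (∏ θ ∈ range (t + 1), (1 - d / #(S θ) : ℚ)) * inducedCard E (S 0)
        = (1 - d / #(S t)) * ((∏ θ ∈ range t, (1 - d / #(S θ) : ℚ)) * inducedCard E (S 0)) := by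
          rw [prod_range_succ]; ring
      _ ≤ (1 - d / #(S t)) * inducedCard E (S t) :=
          mul_le_mul_of_nonneg_left (ih (Nat.le_of_succ_le ht)) hfactor
      _ ≤ inducedCard E (S (t + 1)) := hS ▸ one_sub_div_card_mul_inducedCard_le hE hv hmin

end IsMinDegreeDeletion

end Hypergraph

open Hypergraph

theorem decremental_greedy_weight_bound_general
    {V : Type*} [Fintype V] [DecidableEq V] (n k d m : ℕ)
    (hcard : Fintype.card V = n) (hdk : d ≤ k)
    (E : Multiset (Finset V)) (hm : E.card = m)
    (hE : ∀ e ∈ E, e.Nonempty ∧ e.card ≤ d)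
    (S : ℕ → Finset V) (v : ℕ → V)
    (hS0 : S 0 = Finset.univ)
    (hstep : ∀ θ < n - k,
      v θ ∈ S θ ∧
      (∀ u ∈ S θ,
        (E.filter (fun e => e ⊆ S θ ∧ v θ ∈ e)).card ≤
        (E.filter (fun e => e ⊆ S θ ∧ u ∈ e)).card) ∧
      S (θ + 1) = (S θ).erase (v θ)) :
    (m : ℚ) * ∏ θ ∈ Finset.Icc 1 (n - k), (1 - (d : ℚ) / ((n : ℚ) - θ + 1)) ≤
      ((E.filter (fun e => e ⊆ S (n - k))).card : ℚ) := by
  have hdel : IsMinDegreeDeletion E S v (n - k) := hstep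
  have hcardS : ∀ θ ≤ n - k, #(S θ) = n - θ := fun θ hθ => by
    rw [hdel.card_eq hθ, hS0, card_univ, hcard]
  have hprod : ∏ θ ∈ Icc 1 (n - k), (1 - (d : ℚ) / ((n : ℚ) - θ + 1)) =
      ∏ θ ∈ range (n - k), (1 - d / #(S θ) : ℚ) := by
    rw [← Finset.Ico_succ_right_eq_Icc, prod_Ico_eq_prod_range, Order.succ_eq_add_one,
      Nat.add_sub_cancel]
    refine prod_congr rfl fun θ hθ => ?_
    rw [hcardS θ (mem_range.mp hθ).le, Nat.cast_sub (by have := mem_range.mp hθ; omega)]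
    push_cast
    ring_nf
  have hinduced0 : inducedCard E (S 0) = m := by
    rw [inducedCard, hS0, Multiset.filter_eq_self.mpr fun e _ => subset_univ e, hm]
  calc (m : ℚ) * ∏ θ ∈ Icc 1 (n - k), (1 - (d : ℚ) / ((n : ℚ) - θ + 1))
      = (∏ θ ∈ range (n - k), (1 - d / #(S θ) : ℚ)) * inducedCard E (S 0) := by
        rw [hprod, hinduced0, mul_comm]
    _ ≤ inducedCard E (S (n - k)) :=
        hdel.prod_mul_inducedCard_le (fun e he => (hE e he).2)
          (fun θ hθ => by rw [hcardS θ hθ.le]; omega) le_rfl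

/-- Iterated minimum-degree vertex deletion: starting from all `n` vertices and
repeatedly deleting a vertex of minimum degree (in the currently induced
hypergraph) for `n - k` steps leaves at least
`m * ∏_{θ=1}^{n-k} (1 - d/(n - θ + 1))` hyperedges induced on the retained set. -/
theorem decremental_greedy_weight_bound
    {V : Type*} [Fintype V] [DecidableEq V] (n k d m : ℕ)
    (hcard : Fintype.card V = n) (hdk : d ≤ k) (hkn : k ≤ n)
    (E : Multiset (Finset V)) (hm : E.card = m)
    (hE : ∀ e ∈ E, e.Nonempty ∧ e.card ≤ d)
    (S : ℕ → Finset V) (v : ℕ → V)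
    (hS0 : S 0 = Finset.univ)
    (hstep : ∀ θ < n - k,
      v θ ∈ S θ ∧
      (∀ u ∈ S θ,
        (E.filter (fun e => e ⊆ S θ ∧ v θ ∈ e)).card ≤
        (E.filter (fun e => e ⊆ S θ ∧ u ∈ e)).card) ∧
      S (θ + 1) = (S θ).erase (v θ)) :
    (m : ℚ) * ∏ θ ∈ Finset.Icc 1 (n - k), (1 - (d : ℚ) / ((n : ℚ) - θ + 1)) ≤
      ((E.filter (fun e => e ⊆ S (n - k))).card : ℚ) :=
  decremental_greedy_weight_bound_general n k d m hcard hdk E hm hE S v hS0 hstep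
end

section
/- The decremental greedy algorithm for the densest k-sub-hypergraph problem achieves approximation ratio C(k, d)/C(n, d): for any hypergraph on n vertices with hyperedges of size at most d and any k with d ≤ k ≤ n, repeatedly deleting a minimum-degree vertex until k vertices remain retains at least (C(k,d)/C(n,d)) times the maximum number of hyperedges inducible by any k-vertex subset. -/
private lemma card_filter_split {α : Type*} (p q : α → Prop) [DecidablePred p]
    [DecidablePred q] (s : Multiset α) :
    Multiset.card (s.filter fun a => p a ∧ q a) +
      Multiset.card (s.filter fun a => p a ∧ ¬ q a) =
    Multiset.card (s.filter p) := by
  induction s using Multiset.induction with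
  | empty => simp
  | cons a s ih =>
    by_cases hp : p a <;> by_cases hq : q a <;>
      simp [Multiset.filter_cons, hp, hq, ← ih] <;> omega

private lemma sum_deg_le {V : Type*} [DecidableEq V] (d : ℕ) (T : Finset V)
    (E : Multiset (Finset V)) (hE : ∀ e ∈ E, e.card ≤ d) :
    ∑ u ∈ T, Multiset.card (E.filter fun e => e ⊆ T ∧ u ∈ e) ≤
      d * Multiset.card (E.filter fun e => e ⊆ T) := by
  induction E using Multiset.induction with
  | empty => simp
  | cons a s ih =>
    have ha : a.card ≤ d := hE a (Multiset.mem_cons_self a s)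
    have hs := ih (fun e he => hE e (Multiset.mem_cons_of_mem he))
    simp only [Multiset.filter_cons, Multiset.card_add, Finset.sum_add_distrib, mul_add]
    refine add_le_add ?_ hs
    by_cases haT : a ⊆ T
    · simp only [haT, true_and]
      have : ∀ u ∈ T, Multiset.card (if u ∈ a then ({a} : Multiset (Finset V)) else 0)
          = if u ∈ a then 1 else 0 := by intro u _; split <;> simp
      rw [Finset.sum_congr rfl this]
      have h2 : ∑ u ∈ T, (if u ∈ a then 1 else 0) = (T ∩ a).card := by
        rw [Finset.card_eq_sum_ones]
        rw [← Finset.sum_ite_mem]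
      rw [h2, Finset.inter_eq_right.mpr haT]
      simpa using ha
    · simp [haT]


/-- Decremental greedy achieves approximation ratio `C(k,d)/C(n,d)` for the
densest `k`-sub-hypergraph problem: the number of hyperedges induced on the
retained set after `n - k` minimum-degree deletions is at least
`C(k,d)/C(n,d)` times the number induced by any `k`-vertex subset. -/
theorem decremental_greedy_approximation
    {V : Type*} [Fintype V] [DecidableEq V] (n k d : ℕ)
    (hcard : Fintype.card V = n) (hdk : d ≤ k) (hkn : k ≤ n)
    (E : Multiset (Finset V))
    (hE : ∀ e ∈ E, e.Nonempty ∧ e.card ≤ d)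
    (S : ℕ → Finset V) (v : ℕ → V)
    (hS0 : S 0 = Finset.univ)
    (hstep : ∀ θ < n - k,
      v θ ∈ S θ ∧
      (∀ u ∈ S θ,
        (E.filter (fun e => e ⊆ S θ ∧ v θ ∈ e)).card ≤
        (E.filter (fun e => e ⊆ S θ ∧ u ∈ e)).card) ∧
      S (θ + 1) = (S θ).erase (v θ)) :
    ∀ Sopt : Finset V, Sopt.card = k →
      ((Nat.choose k d : ℚ) / (Nat.choose n d : ℚ)) *
          ((E.filter (fun e => e ⊆ Sopt)).card : ℚ) ≤
        ((E.filter (fun e => e ⊆ S (n - k))).card : ℚ) := by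
  -- cardinality of S θ
  have hScard : ∀ θ, θ ≤ n - k → (S θ).card = n - θ := by
    intro θ hθ
    induction θ with
    | zero => simp [hS0, Finset.card_univ, hcard]
    | succ θ ih =>
      have hθ' : θ < n - k := lt_of_lt_of_le (Nat.lt_succ_self θ) hθ
      obtain ⟨hv, _, hSe⟩ := hstep θ hθ'
      rw [hSe, Finset.card_erase_of_mem hv, ih (le_of_lt hθ')]
      omega
  -- step inequality in ℕ
  set m : ℕ → ℕ := fun θ => Multiset.card (E.filter fun e => e ⊆ S θ) with hm
  have hstepineq : ∀ θ < n - k, (n - θ - d) * m θ ≤ (n - θ) * m (θ + 1) := by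
    intro θ hθ
    obtain ⟨hv, hmin, hSe⟩ := hstep θ hθ
    set T := S θ
    set w := v θ
    have hTcard : T.card = n - θ := hScard θ (le_of_lt hθ)
    have hsd : d ≤ n - θ := by omega
    have hs0 : 0 < n - θ := by omega
    -- split m θ
    have hsplit : Multiset.card (E.filter fun e => e ⊆ T ∧ w ∈ e) + m (θ + 1) = m θ := by
      have := card_filter_split (fun e : Finset V => e ⊆ T) (fun e => w ∈ e) E
      have heq : (E.filter fun e => e ⊆ T ∧ w ∉ e) = E.filter fun e => e ⊆ S (θ + 1) := by
        apply Multiset.filter_congr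
        intro e _
        rw [hSe]
        exact (Finset.subset_erase).symm
      rw [heq] at this
      exact this
    -- min degree bound
    have hdeg : (n - θ) * Multiset.card (E.filter fun e => e ⊆ T ∧ w ∈ e) ≤ d * m θ := by
      calc (n - θ) * Multiset.card (E.filter fun e => e ⊆ T ∧ w ∈ e)
          = ∑ _u ∈ T, Multiset.card (E.filter fun e => e ⊆ T ∧ w ∈ e) := by
            rw [Finset.sum_const, hTcard, smul_eq_mul]
        _ ≤ ∑ u ∈ T, Multiset.card (E.filter fun e => e ⊆ T ∧ u ∈ e) :=
            Finset.sum_le_sum (fun u hu => hmin u hu)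
        _ ≤ d * m θ := sum_deg_le d T E (fun e he => (hE e he).2)
    have h1 : (n - θ - d) * m θ + (n - θ) * Multiset.card (E.filter fun e => e ⊆ T ∧ w ∈ e)
        ≤ (n - θ) * m θ := by
      calc (n - θ - d) * m θ + (n - θ) * Multiset.card (E.filter fun e => e ⊆ T ∧ w ∈ e)
          ≤ (n - θ - d) * m θ + d * m θ := by omega
        _ = (n - θ) * m θ := by rw [← add_mul]; congr 1; omega
    have h2 : (n - θ) * m θ =
        (n - θ) * Multiset.card (E.filter fun e => e ⊆ T ∧ w ∈ e) + (n - θ) * m (θ + 1) := by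
      rw [← mul_add, hsplit]
    omega
  -- main induction
  have hmain : ∀ θ ≤ n - k, Nat.choose (n - θ) d * m 0 ≤ Nat.choose n d * m θ := by
    intro θ hθ
    induction θ with
    | zero => simp
    | succ θ ih =>
      have hθ' : θ < n - k := lt_of_lt_of_le (Nat.lt_succ_self θ) hθ
      have ih' := ih (le_of_lt hθ')
      have hs0 : 0 < n - θ := by omega
      refine Nat.le_of_mul_le_mul_left ?_ hs0
      have hid : (n - θ) * Nat.choose (n - (θ + 1)) d = (n - θ - d) * Nat.choose (n - θ) d := by
        have := Nat.choose_mul_succ_eq (n - (θ + 1)) d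
        have h1 : n - (θ + 1) + 1 = n - θ := by omega
        rw [h1] at this
        rw [mul_comm, this, mul_comm]
      calc (n - θ) * (Nat.choose (n - (θ + 1)) d * m 0)
          = ((n - θ) * Nat.choose (n - (θ + 1)) d) * m 0 := by ring
        _ = (n - θ - d) * (Nat.choose (n - θ) d * m 0) := by rw [hid]; ring
        _ ≤ (n - θ - d) * (Nat.choose n d * m θ) := Nat.mul_le_mul_left _ ih'
        _ = Nat.choose n d * ((n - θ - d) * m θ) := by ring
        _ ≤ Nat.choose n d * ((n - θ) * m (θ + 1)) := Nat.mul_le_mul_left _ (hstepineq θ hθ')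
        _ = (n - θ) * (Nat.choose n d * m (θ + 1)) := by ring
  -- conclusion
  intro Sopt hSopt
  have hm0 : m 0 = Multiset.card E := by
    simp only [hm, hS0, Finset.subset_univ]
    rw [Multiset.filter_eq_self.mpr (fun e _ => trivial)]
  have hopt : Multiset.card (E.filter fun e => e ⊆ Sopt) ≤ m 0 := by
    rw [hm0]; exact Multiset.card_le_card (Multiset.filter_le _ _)
  have hkey : Nat.choose k d * Multiset.card (E.filter fun e => e ⊆ Sopt) ≤
      Nat.choose n d * m (n - k) := by
    have h := hmain (n - k) le_rfl
    rw [Nat.sub_sub_self hkn] at h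
    calc Nat.choose k d * Multiset.card (E.filter fun e => e ⊆ Sopt)
        ≤ Nat.choose k d * m 0 := Nat.mul_le_mul_left _ hopt
      _ ≤ Nat.choose n d * m (n - k) := h
  have hpos : (0 : ℚ) < (Nat.choose n d : ℚ) := by
    exact_mod_cast Nat.choose_pos (hdk.trans hkn)
  rw [div_mul_eq_mul_div, div_le_iff₀ hpos]
  have hq : ((Nat.choose k d * Multiset.card (E.filter fun e => e ⊆ Sopt) : ℕ) : ℚ) ≤
      ((Nat.choose n d * m (n - k) : ℕ) : ℚ) := by exact_mod_cast hkey
  push_cast at hq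
  show (Nat.choose k d : ℚ) * (Multiset.card (E.filter fun e => e ⊆ Sopt) : ℚ) ≤
    (m (n - k) : ℚ) * (Nat.choose n d : ℚ)
  linarith
end

section
/- Reduction correctness from k-Vertex Cover to TUMP(γ=0.5): given a graph G = (V, E), construct one base-station per vertex and, for each edge {u, v}, a length-2 trajectory through the two corresponding base-stations with equal weights w = 1/2 on each, both being bottlenecks. Then for every subset S ⊆ V, the number of trajectories T whose utility W(T, S) = Σ_{bottleneck B ∈ T ∩ S} w ≥ 0.5 equals the number of edges of G covered by S (i.e., with at least one endpoint in S). -/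
/-- Correctness of the reduction from `k`-Vertex Cover to TUMP(γ=0.5): each
edge `{u,v}` of `G` becomes a length-2 trajectory with weight `1/2` on each of
its two (bottleneck) base-stations.  For every `S ⊆ V`, the number of
trajectories with utility `W(T,S) = (1/2)·|T ∩ S| ≥ 1/2` equals the number of
edges of `G` covered by `S` (having at least one endpoint in `S`). -/
theorem tump_vertex_cover_reduction
    {V : Type*} [Fintype V] [DecidableEq V]
    (G : SimpleGraph V) [DecidableRel G.Adj] (S : Finset V) :
    (G.edgeFinset.filter (fun e =>
        (1 / 2 : ℚ) * ((Finset.univ.filter (fun v => v ∈ e ∧ v ∈ S)).card : ℚ)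
          ≥ 1 / 2)).card =
      (G.edgeFinset.filter (fun e => ∃ v ∈ e, v ∈ S)).card := by
  congr 1
  apply Finset.filter_congr
  intro e _
  constructor
  · intro h
    have hc : 1 ≤ (Finset.univ.filter (fun v => v ∈ e ∧ v ∈ S)).card := by
      by_contra hc
      push_neg at hc
      interval_cases h' : (Finset.univ.filter (fun v => v ∈ e ∧ v ∈ S)).card
      · simp [h'] at h
        norm_num at h
    obtain ⟨v, hv⟩ := Finset.card_pos.mp hc
    simp only [Finset.mem_filter, Finset.mem_univ, true_and] at hv
    exact ⟨v, hv.1, hv.2⟩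
  · rintro ⟨v, hv, hvS⟩
    have : 1 ≤ (Finset.univ.filter (fun v => v ∈ e ∧ v ∈ S)).card :=
      Finset.card_pos.mpr ⟨v, by simp [hv, hvS]⟩
    have : (1 : ℚ) ≤ ((Finset.univ.filter (fun v => v ∈ e ∧ v ∈ S)).card : ℚ) := by
      exact_mod_cast this
    nlinarith
end
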